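/- For every real α with 1/2 ≤ α ≤ 1, the tuple (a,b,c,d,e,f) = (√(3/(2(1+α))), √(2(1+α)/3), α·√(3/(2(1+α))), √(2(1+α)/3), 0, 0) is a general configuration for α, its double bubble perimeter 2(a+b+c+f)+(d+e) equals 2√(6(1+α)), and every general configuration for α has double bubble perimeter at least 2√(6(1+α)). -/

import Mathlib

/-!
A general configuration is compared with two rectangles sharing part of an edge. If they have
areas at least `A` and `B`, heights `h₂ ≤ h₁`, and the taller one has area `A ≤ 2 B`, then their
perimeter `2 w₁ + 2 w₂ + 2 h₁ + h₂` is at least `2 S / t + 3 t ≥ √(24 S)` for `S = A + B` and a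
suitable height `t`, by AM-GM. When `f ≤ d` the configuration dominates two rectangles side by
side, and when `d ≤ f` and `B ≤ a f` two stacked rectangles. Otherwise the second region is an
L-shape which may be widened to run under the whole first rectangle; it is then again dominated
by two rectangles, unless its column is at least twice as tall as the first rectangle is wide, in
which case AM-GM applied to each region separately suffices because `B ≤ 3 A`.
-/

/-- A general configuration for `α` (Figure 3 of the paper). -/
def IsGeneralConfig (α a b c d e f : ℝ) : Prop :=
  0 < a ∧ 0 < b ∧ 0 ≤ c ∧ 0 ≤ d ∧ 0 ≤ e ∧ 0 ≤ f ∧ d ≤ b ∧ e ≤ a ∧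
    ((a * b = 1 ∧ c * d + c * f + e * f = α) ∨
      (a * b = α ∧ c * d + c * f + e * f = 1))

open Real

theorem sqrt_four_mul_mul_le_mul_add_div {p q t : ℝ} (hp : 0 ≤ p) (hq : 0 ≤ q) (ht : 0 < t) :
    √(4 * p * q) ≤ p * t + q / t := by
  have hpq : p * t * (q / t) = p * q := by field_simp
  rw [sqrt_le_left (by positivity)]
  nlinarith [sq_nonneg (p * t - q / t)]

theorem div_add_sub_div_add {c x y : ℝ} (hx : x ≠ 0) (hy : y ≠ 0) :
    c / y + y - (c / x + x) = (y - x) * (x * y - c) / (x * y) := by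
  field_simp
  ring

theorem div_add_le_div_add_of_le_mul {c x y : ℝ} (hx : 0 < x) (hxy : x ≤ y) (h : c ≤ x * y) :
    c / x + x ≤ c / y + y := by
  have hy : 0 < y := hx.trans_le hxy
  rw [← sub_nonneg, div_add_sub_div_add hx.ne' hy.ne']
  exact div_nonneg (mul_nonneg (by linarith) (by linarith)) (by positivity)

theorem div_add_le_div_add_of_mul_le {c x y : ℝ} (hx : 0 < x) (hxy : x ≤ y) (h : x * y ≤ c) :
    c / y + y ≤ c / x + x := by
  have hy : 0 < y := hx.trans_le hxy
  rw [← sub_nonneg, ← neg_sub, div_add_sub_div_add hx.ne' hy.ne', ← neg_div]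
  exact div_nonneg (by nlinarith) (by positivity)

theorem sqrt_le_two_rectangles_perimeter {A B w₁ h₁ w₂ h₂ : ℝ} (hA : 0 ≤ A) (hB : 0 < B)
    (hAB : A ≤ 2 * B) (hh₂ : 0 < h₂) (hh : h₂ ≤ h₁) (hA₁ : A ≤ w₁ * h₁)
    (hB₂ : B ≤ w₂ * h₂) :
    √(24 * (A + B)) ≤ 2 * w₁ + 2 * w₂ + 2 * h₁ + h₂ := by
  have hh₁ : 0 < h₁ := hh₂.trans_le hh
  have hw₁ : A / h₁ ≤ w₁ := by rwa [div_le_iff₀ hh₁]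
  have hw₂ : B / h₂ ≤ w₂ := by rwa [div_le_iff₀ hh₂]
  -- `2 S / t + 3 t` is the perimeter of two rectangles of common height `t` and total area `S`.
  suffices ∃ t > 0, 3 * t + 2 * (A + B) / t ≤ 2 * (A / h₁ + h₁) + (2 * B / h₂ + h₂) by
    obtain ⟨t, ht, hle⟩ := this
    have := sqrt_four_mul_mul_le_mul_add_div (by norm_num : (0 : ℝ) ≤ 3)
      (by positivity : 0 ≤ 2 * (A + B)) ht
    rw [show (4 : ℝ) * 3 * (2 * (A + B)) = 24 * (A + B) by ring] at this
    have : 2 * B / h₂ = 2 * (B / h₂) := mul_div_assoc _ _ _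
    linarith
  rcases le_total (h₁ ^ 2) (2 * B) with hsmall | hlarge
  · refine ⟨h₁, hh₁, ?_⟩
    have := div_add_le_div_add_of_mul_le (c := 2 * B) hh₂ hh (by nlinarith)
    have : 2 * (A + B) / h₁ = 2 * (A / h₁) + 2 * B / h₁ := by ring
    linarith
  · set w := √(2 * B)
    have hw : 0 < w := sqrt_pos.2 (by linarith)
    have hw2 : w ^ 2 = 2 * B := sq_sqrt (by linarith)
    have hwh : w ≤ h₁ := by nlinarith
    refine ⟨w, hw, ?_⟩
    have h₁_side := div_add_le_div_add_of_le_mul (c := A) hw hwh (by nlinarith)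
    have h₂_side :=
      sqrt_four_mul_mul_le_mul_add_div zero_le_one (by positivity : 0 ≤ 2 * B) hh₂
    rw [show (4 : ℝ) * 1 * (2 * B) = 2 ^ 2 * (2 * B) by ring, sqrt_mul (by norm_num),
      sqrt_sq (by norm_num)] at h₂_side
    have : 2 * (A + B) / w = 2 * (A / w) + w := by field_simp; linear_combination -hw2
    linarith

theorem add_pos_of_area_pos {B c d e f : ℝ} (hB : 0 < B) (hd : 0 ≤ d) (hf : 0 ≤ f)
    (harea : c * d + c * f + e * f = B) : 0 < d + f := by
  by_contra! h
  obtain rfl : d = 0 := by linarith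
  obtain rfl : f = 0 := by linarith
  simp only [mul_zero, add_zero] at harea
  linarith

theorem sqrt_le_perimeter_of_le {A B a b c d e f : ℝ} (hA : 0 < A) (hB : 0 < B)
    (hAB : A ≤ 2 * B) (hBA : B ≤ 2 * A) (hb : 0 < b) (hd : 0 ≤ d) (he : 0 ≤ e)
    (hf : 0 ≤ f) (hdb : d ≤ b) (hab : a * b = A) (harea : c * d + c * f + e * f = B)
    (hfd : f ≤ d) : √(24 * (A + B)) ≤ 2 * (a + b + c + f) + (d + e) := by
  have hs : 0 < d + f := add_pos_of_area_pos hB hd hf harea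
  have hB_le : B ≤ (c + e / 2) * (d + f) := by nlinarith [mul_le_mul_of_nonneg_left hfd he]
  rcases le_total (d + f) b with hsb | hbs
  · have := sqrt_le_two_rectangles_perimeter hA.le hB hAB hs hsb hab.ge hB_le
    linarith
  · have := sqrt_le_two_rectangles_perimeter hB.le hA hBA hb hbs hB_le hab.ge
    rw [add_comm B] at this
    linarith

theorem sqrt_le_perimeter_of_le_mul {A B a b c d e f : ℝ} (hA : 0 ≤ A) (hB : 0 < B)
    (hAB : A ≤ 2 * B) (hc : 0 ≤ c) (hd : 0 ≤ d) (hab : a * b = A)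
    (harea : c * d + c * f + e * f = B) (hdf : d ≤ f) (hBaf : B ≤ a * f) :
    √(24 * (A + B)) ≤ 2 * (a + b + c + f) + (d + e) := by
  have hf : 0 < f := by linarith [add_pos_of_area_pos hB hd (hd.trans hdf) harea]
  have hBf : B / f ≤ 2 * c + e := by
    rw [div_le_iff₀ hf]
    nlinarith [mul_le_mul_of_nonneg_left hdf hc]
  have := sqrt_le_two_rectangles_perimeter hA hB hAB (by positivity)
    ((div_le_iff₀ hf).2 hBaf) (by rw [mul_comm, hab]) (by rw [mul_div_cancel₀ _ hf.ne'])
  linarith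

theorem sqrt_twentyfour_mul_add_le {A B : ℝ} (hB : 0 ≤ B) (hBA : B ≤ 3 * A) :
    √(24 * (A + B)) ≤ √(24 * A) + √(8 * B) := by
  have hle : √(8 * B) ≤ √(24 * A) := sqrt_le_sqrt (by linarith)
  rw [sqrt_le_left (by positivity)]
  nlinarith [sq_sqrt (show 0 ≤ 8 * B by positivity), sq_sqrt (show 0 ≤ 24 * A by linarith),
    mul_le_mul_of_nonneg_right hle (sqrt_nonneg (8 * B))]

/-- The second region here is a strip of width `a` and height `f` under the first one, next to a
column of height `s` and width `(B - a * f) / s`. -/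
theorem sqrt_le_perimeter_L_shape {A B a b f s : ℝ} (hA : 0 < A) (hB : 0 < B)
    (hAB : A ≤ 2 * B) (hBA : B ≤ 2 * A) (ha : 0 < a) (hf : 0 ≤ f) (hfs : f ≤ s) (hs : 0 < s)
    (hab : a * b = A) (hafB : a * f ≤ B) :
    √(24 * (A + B)) ≤ 3 * a + 2 * b + f + s + 2 * ((B - a * f) / s) := by
  rcases le_total (2 * a) s with hwide | hnarrow
  · have h₁ := sqrt_four_mul_mul_le_mul_add_div (by norm_num : (0 : ℝ) ≤ 3)
      (by positivity : 0 ≤ 2 * A) ha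
    have h₂ := sqrt_four_mul_mul_le_mul_add_div zero_le_one (by positivity : 0 ≤ 2 * B) hs
    rw [show (4 : ℝ) * 3 * (2 * A) = 24 * A by ring, ← hab,
      show 2 * (a * b) / a = 2 * b by field_simp, hab] at h₁
    rw [show (4 : ℝ) * 1 * (2 * B) = 8 * B by ring] at h₂
    have h₃ : 2 * B / s ≤ f + 2 * ((B - a * f) / s) := by
      rw [div_le_iff₀ hs, add_mul, mul_assoc, div_mul_cancel₀ _ hs.ne']
      nlinarith [mul_nonneg hf (sub_nonneg.2 hwide)]
    linarith [sqrt_twentyfour_mul_add_le hB.le (by linarith : B ≤ 3 * A)]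
  rcases le_total (a * s) B with hshort | htall
  · have := sqrt_le_two_rectangles_perimeter hB.le hA hBA ha ((le_div_iff₀ hs).2 hshort)
      (by rw [mul_div_cancel₀ _ hs.ne']) (by rw [mul_comm, hab])
    rw [add_comm B] at this
    have : 2 * s + 2 * (B / s) ≤ 2 * a + s + f + 2 * ((B - a * f) / s) := by
      rw [← sub_nonneg, show 2 * a + s + f + 2 * ((B - a * f) / s) - (2 * s + 2 * (B / s))
        = (2 * a - s) * (s - f) / s by field_simp; ring]
      exact div_nonneg (mul_nonneg (by linarith) (by linarith)) hs.le
    linarith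
  · have := sqrt_le_two_rectangles_perimeter hA.le hB hAB ha le_rfl (by rw [mul_comm, hab])
      (by rw [div_mul_cancel₀ _ ha.ne'])
    have : 2 * (B / a) ≤ f + s + 2 * ((B - a * f) / s) := by
      rw [← sub_nonneg, show f + s + 2 * ((B - a * f) / s) - 2 * (B / a)
        = ((a * s - B) * s + (B - a * f) * (2 * a - s)) / (a * s) by field_simp; ring]
      have := mul_nonneg (sub_nonneg.2 htall) hs.le
      have := mul_nonneg (sub_nonneg.2 hafB) (sub_nonneg.2 hnarrow)
      exact div_nonneg (by linarith) (by positivity)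
    linarith

theorem sqrt_le_perimeter_of_mul_le {A B a b c d e f : ℝ} (hA : 0 < A) (hB : 0 < B)
    (hAB : A ≤ 2 * B) (hBA : B ≤ 2 * A) (ha : 0 < a) (hd : 0 ≤ d)
    (hea : e ≤ a) (hab : a * b = A) (harea : c * d + c * f + e * f = B) (hdf : d ≤ f)
    (hafB : a * f ≤ B) : √(24 * (A + B)) ≤ 2 * (a + b + c + f) + (d + e) := by
  have hs : 0 < d + f := add_pos_of_area_pos hB hd (hd.trans hdf) harea
  have := sqrt_le_perimeter_L_shape hA hB hAB hBA ha (by linarith) (by linarith) hs hab hafB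
  -- As `d ≤ f`, widening the strip under the first region from `e` to `a` cannot add perimeter.
  suffices a + 2 * ((B - a * f) / (d + f)) ≤ 2 * c + e by linarith
  rw [← sub_nonneg, show 2 * c + e - (a + 2 * ((B - a * f) / (d + f)))
    = (a - e) * (f - d) / (d + f) by rw [← harea]; field_simp; ring]
  exact div_nonneg (mul_nonneg (by linarith) (by linarith)) hs.le

theorem sqrt_le_perimeter {A B a b c d e f : ℝ} (hA : 0 < A) (hB : 0 < B) (hAB : A ≤ 2 * B)
    (hBA : B ≤ 2 * A) (ha : 0 < a) (hb : 0 < b) (hc : 0 ≤ c) (hd : 0 ≤ d) (he : 0 ≤ e)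
    (hf : 0 ≤ f) (hdb : d ≤ b) (hea : e ≤ a) (hab : a * b = A)
    (harea : c * d + c * f + e * f = B) : √(24 * (A + B)) ≤ 2 * (a + b + c + f) + (d + e) := by
  rcases le_total f d with hfd | hdf
  · exact sqrt_le_perimeter_of_le hA hB hAB hBA hb hd he hf hdb hab harea hfd
  rcases le_total B (a * f) with hBaf | hafB
  · exact sqrt_le_perimeter_of_le_mul hA.le hB hAB hc hd hab harea hdf hBaf
  · exact sqrt_le_perimeter_of_mul_le hA hB hAB hBA ha hd hea hab harea hdf hafB

theorem IsGeneralConfig.sqrt_le_perimeter {α a b c d e f : ℝ}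
    (h : IsGeneralConfig α a b c d e f) (h0 : 1 / 2 ≤ α) (h1 : α ≤ 2) :
    √(24 * (1 + α)) ≤ 2 * (a + b + c + f) + (d + e) := by
  obtain ⟨ha, hb, hc, hd, he, hf, hdb, hea, ⟨hab, harea⟩ | ⟨hab, harea⟩⟩ := h
  · exact _root_.sqrt_le_perimeter one_pos (by linarith) (by linarith) (by linarith)
      ha hb hc hd he hf hdb hea hab harea
  · rw [add_comm]
    exact _root_.sqrt_le_perimeter (by linarith) one_pos (by linarith) (by linarith)
      ha hb hc hd he hf hdb hea hab harea

theorem general_case_attained_high (α : ℝ) (h0 : 1 / 2 ≤ α) (h1 : α ≤ 1) :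
    IsGeneralConfig α (Real.sqrt (3 / (2 * (1 + α)))) (Real.sqrt (2 * (1 + α) / 3))
        (α * Real.sqrt (3 / (2 * (1 + α)))) (Real.sqrt (2 * (1 + α) / 3)) 0 0 ∧
      2 * (Real.sqrt (3 / (2 * (1 + α))) + Real.sqrt (2 * (1 + α) / 3) +
            α * Real.sqrt (3 / (2 * (1 + α))) + 0) + (Real.sqrt (2 * (1 + α) / 3) + 0) =
        2 * Real.sqrt (6 * (1 + α)) ∧
      ∀ a b c d e f : ℝ, IsGeneralConfig α a b c d e f →
        2 * Real.sqrt (6 * (1 + α)) ≤ 2 * (a + b + c + f) + (d + e) := by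
  have hS : 0 < 2 * (1 + α) / 3 := by linarith
  set t := √(2 * (1 + α) / 3)
  have ht : 0 < t := sqrt_pos.2 hS
  have ht2 : t ^ 2 = 2 * (1 + α) / 3 := sq_sqrt hS.le
  have hinv : √(3 / (2 * (1 + α))) = t⁻¹ := by rw [← sqrt_inv, inv_div]
  have h6 : √(6 * (1 + α)) = 3 * t := by
    rw [show 6 * (1 + α) = 3 ^ 2 * (2 * (1 + α) / 3) by ring, sqrt_mul (by norm_num),
      sqrt_sq (by norm_num)]
  have h24 : 2 * √(6 * (1 + α)) = √(24 * (1 + α)) := by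
    rw [h6, show 24 * (1 + α) = (6 * t) ^ 2 by linear_combination -36 * ht2,
      sqrt_sq (by positivity)]
    ring
  refine ⟨?_, ?_, fun a b c d e f h => h24 ▸ h.sqrt_le_perimeter h0 (by linarith)⟩
  · rw [hinv]
    refine ⟨inv_pos.2 ht, ht, by positivity, ht.le, le_rfl, le_rfl, le_rfl, (inv_pos.2 ht).le,
      Or.inl ⟨inv_mul_cancel₀ ht.ne', by field_simp; ring⟩⟩
  · rw [hinv, h6]
    field_simp
    linear_combination -3 * ht2
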